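/- arXiv:2604.15886 — 7 statements merged into one kernel-verified Lean document; each statement's English description precedes it below -/
import Mathlib

section
/- The matrices F₁, F₂, F₃ satisfy the six commutator identities [F₁, X] = F₂, [F₁, Y] = F₂, [F₂, X] = −(sin γ)² F₁, [F₂, Y] = −F₃, [F₃, X] = (sin γ)² F₂, and [F₃, Y] = F₂. Consequently the linear span of {F₁, F₂, F₃} in the 3×3 real matrices is invariant under the maps M ↦ [M, X] and M ↦ [M, Y]. -/
open Matrix Real

/-- The generator of the global Grover operator in the large-block limit. -/
noncomputable def Xmat (γ : ℝ) : Matrix (Fin 3) (Fin 3) ℝ :=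
  !![0, (sin γ)^2, sin γ * cos γ;
     -(sin γ)^2, 0, 0;
     -(sin γ * cos γ), 0, 0]

/-- The generator of the local Grover operator in the large-block limit. -/
def Ymat : Matrix (Fin 3) (Fin 3) ℝ :=
  !![0, 1, 0; -1, 0, 0; 0, 0, 0]

/-- The matrix commutator `[A, B] = AB − BA`. -/
def matComm (A B : Matrix (Fin 3) (Fin 3) ℝ) : Matrix (Fin 3) (Fin 3) ℝ := A * B - B * A

noncomputable def F1 (γ : ℝ) : Matrix (Fin 3) (Fin 3) ℝ := Xmat γ - Ymat
noncomputable def F2 (γ : ℝ) : Matrix (Fin 3) (Fin 3) ℝ := matComm (Xmat γ) Ymat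
noncomputable def F3 (γ : ℝ) : Matrix (Fin 3) (Fin 3) ℝ := matComm Ymat (matComm (Xmat γ) Ymat)

/-! Three of the identities are formal: `[X − Y, X] = [X − Y, Y] = [X, Y]` and
`[[X, Y], Y] = −[Y, [X, Y]]`. For the others, `F₂` and `F₃` are `sin γ cos γ` times the
infinitesimal rotations in the coordinate planes `(1, 2)` and `(0, 2)`, and `sin² γ + cos² γ = 1`
turns the entries `sin² γ − 1` of `F₁` into `−cos² γ`; each remaining commutator is then a
polynomial identity in `sin γ` and `cos γ`. As `M ↦ [M, B]` is linear, invariance of the span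
only needs checking on `F₁, F₂, F₃`. -/

lemma F1_eq (γ : ℝ) :
    F1 γ = !![0, -(cos γ)^2, sin γ * cos γ; (cos γ)^2, 0, 0; -(sin γ * cos γ), 0, 0] := by
  ext i j
  fin_cases i <;> fin_cases j <;> simp [F1, Xmat, Ymat, cos_sq', neg_add_eq_sub]

lemma F2_eq (γ : ℝ) : F2 γ = !![0, 0, 0; 0, 0, sin γ * cos γ; 0, -(sin γ * cos γ), 0] := by
  ext i j
  fin_cases i <;> fin_cases j <;> simp [F2, matComm, Xmat, Ymat]

lemma F3_eq (γ : ℝ) : F3 γ = !![0, 0, sin γ * cos γ; 0, 0, 0; -(sin γ * cos γ), 0, 0] := by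
  rw [F3, ← F2, F2_eq]
  ext i j
  fin_cases i <;> fin_cases j <;> simp [matComm, Ymat]

lemma matComm_F1_Xmat (γ : ℝ) : matComm (F1 γ) (Xmat γ) = F2 γ := by
  simp only [F1, F2, matComm, sub_mul, mul_sub]
  abel

lemma matComm_F1_Ymat (γ : ℝ) : matComm (F1 γ) Ymat = F2 γ := by
  simp only [F1, F2, matComm, sub_mul, mul_sub]
  abel

lemma matComm_F2_Ymat (γ : ℝ) : matComm (F2 γ) Ymat = -F3 γ := by
  rw [F3, ← F2, matComm, matComm, neg_sub]

lemma matComm_F2_Xmat (γ : ℝ) : matComm (F2 γ) (Xmat γ) = (-(sin γ)^2) • F1 γ := by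
  rw [F2_eq, F1_eq]
  ext i j
  fin_cases i <;> fin_cases j <;> simp [matComm, Xmat] <;> ring

lemma matComm_F3_Xmat (γ : ℝ) : matComm (F3 γ) (Xmat γ) = (sin γ)^2 • F2 γ := by
  rw [F3_eq, F2_eq]
  ext i j
  fin_cases i <;> fin_cases j <;> simp [matComm, Xmat, mul_comm]

lemma matComm_F3_Ymat (γ : ℝ) : matComm (F3 γ) Ymat = F2 γ := by
  rw [F3_eq, F2_eq]
  ext i j
  fin_cases i <;> fin_cases j <;> simp [matComm, Ymat]

lemma matComm_mem_span_of_forall {s : Set (Matrix (Fin 3) (Fin 3) ℝ)} {B : Matrix (Fin 3) (Fin 3) ℝ}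
    (hs : ∀ A ∈ s, matComm A B ∈ Submodule.span ℝ s) {M : Matrix (Fin 3) (Fin 3) ℝ}
    (hM : M ∈ Submodule.span ℝ s) : matComm M B ∈ Submodule.span ℝ s :=
  (Submodule.map_span_le (LinearMap.mulRight ℝ B - LinearMap.mulLeft ℝ B) s _).mpr hs
    ⟨M, hM, rfl⟩

theorem stmt_1_general (γ : ℝ) :
    matComm (F1 γ) (Xmat γ) = F2 γ ∧
    matComm (F1 γ) Ymat = F2 γ ∧
    matComm (F2 γ) (Xmat γ) = (-(sin γ)^2) • F1 γ ∧
    matComm (F2 γ) Ymat = -(F3 γ) ∧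
    matComm (F3 γ) (Xmat γ) = ((sin γ)^2) • F2 γ ∧
    matComm (F3 γ) Ymat = F2 γ ∧
    (∀ M ∈ Submodule.span ℝ ({F1 γ, F2 γ, F3 γ} : Set (Matrix (Fin 3) (Fin 3) ℝ)),
      matComm M (Xmat γ) ∈ Submodule.span ℝ ({F1 γ, F2 γ, F3 γ} : Set (Matrix (Fin 3) (Fin 3) ℝ)) ∧
      matComm M Ymat ∈ Submodule.span ℝ ({F1 γ, F2 γ, F3 γ} : Set (Matrix (Fin 3) (Fin 3) ℝ))) := by
  set S := Submodule.span ℝ ({F1 γ, F2 γ, F3 γ} : Set (Matrix (Fin 3) (Fin 3) ℝ))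
  have hF1 : F1 γ ∈ S := Submodule.subset_span (by simp)
  have hF2 : F2 γ ∈ S := Submodule.subset_span (by simp)
  have hF3 : F3 γ ∈ S := Submodule.subset_span (by simp)
  refine ⟨matComm_F1_Xmat γ, matComm_F1_Ymat γ, matComm_F2_Xmat γ, matComm_F2_Ymat γ,
    matComm_F3_Xmat γ, matComm_F3_Ymat γ, fun M hM => ⟨?_, ?_⟩⟩
  all_goals
    refine matComm_mem_span_of_forall (fun A hA => ?_) hM
    rcases hA with rfl | rfl | rfl
  · simpa only [matComm_F1_Xmat] using hF2
  · simpa only [matComm_F2_Xmat] using S.smul_mem _ hF1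
  · simpa only [matComm_F3_Xmat] using S.smul_mem _ hF2
  · simpa only [matComm_F1_Ymat] using hF2
  · simpa only [matComm_F2_Ymat] using S.neg_mem hF3
  · simpa only [matComm_F3_Ymat] using hF2

/-- The matrices `F₁, F₂, F₃` satisfy the six commutator identities
`[F₁, X] = F₂`, `[F₁, Y] = F₂`, `[F₂, X] = −(sin γ)² F₁`, `[F₂, Y] = −F₃`,
`[F₃, X] = (sin γ)² F₂`, `[F₃, Y] = F₂`, and consequently the span of `{F₁, F₂, F₃}`
is invariant under `M ↦ [M, X]` and `M ↦ [M, Y]`. -/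
theorem stmt_1 (γ : ℝ) (hγ : γ ∈ Set.Ioo 0 (π/2)) :
    matComm (F1 γ) (Xmat γ) = F2 γ ∧
    matComm (F1 γ) Ymat = F2 γ ∧
    matComm (F2 γ) (Xmat γ) = (-(sin γ)^2) • F1 γ ∧
    matComm (F2 γ) Ymat = -(F3 γ) ∧
    matComm (F3 γ) (Xmat γ) = ((sin γ)^2) • F2 γ ∧
    matComm (F3 γ) Ymat = F2 γ ∧
    (∀ M ∈ Submodule.span ℝ ({F1 γ, F2 γ, F3 γ} : Set (Matrix (Fin 3) (Fin 3) ℝ)),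
      matComm M (Xmat γ) ∈ Submodule.span ℝ ({F1 γ, F2 γ, F3 γ} : Set (Matrix (Fin 3) (Fin 3) ℝ)) ∧
      matComm M Ymat ∈ Submodule.span ℝ ({F1 γ, F2 γ, F3 γ} : Set (Matrix (Fin 3) (Fin 3) ℝ))) :=
  stmt_1_general γ
end

section
/- Let I ⊆ ℝ be an open interval and let ψ, p : ℝ → ℝ³ be differentiable on I with ψ'(t) = X ψ(t) and p'(t) = −Xᵀ p(t) for all t ∈ I. Define φⱼ(t) = ⟨p(t), Fⱼ ψ(t)⟩ for j = 1, 2, 3. Then on I the functions φ₁, φ₂, φ₃ are differentiable and satisfy φ₁' = φ₂, φ₂' = −(sin γ)² φ₁, and φ₃' = (sin γ)² φ₂. -/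
open Matrix Real

/-- The reduced switching variable `φⱼ(t) = ⟨p(t), Fⱼ ψ(t)⟩`. -/
noncomputable def phi (p ψ : ℝ → Fin 3 → ℝ) (F : Matrix (Fin 3) (Fin 3) ℝ) (t : ℝ) : ℝ :=
  p t ⬝ᵥ (F *ᵥ ψ t)

lemma phi_hasDerivAt (γ : ℝ) (ψ p : ℝ → Fin 3 → ℝ) (F : Matrix (Fin 3) (Fin 3) ℝ) (t : ℝ)
    (hψ : HasDerivAt ψ (Xmat γ *ᵥ ψ t) t)
    (hp : HasDerivAt p (-((Xmat γ)ᵀ *ᵥ p t)) t) :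
    HasDerivAt (phi p ψ F) (p t ⬝ᵥ ((F * Xmat γ - Xmat γ * F) *ᵥ ψ t)) t := by
  have hψ' := hasDerivAt_pi.1 hψ
  have hp' := hasDerivAt_pi.1 hp
  have key : HasDerivAt (fun u => ∑ i : Fin 3, ∑ j : Fin 3, p u i * (F i j * ψ u j))
      (∑ i : Fin 3, ∑ j : Fin 3, ((-((Xmat γ)ᵀ *ᵥ p t)) i * (F i j * ψ t j)
        + p t i * (F i j * (Xmat γ *ᵥ ψ t) j))) t := by
    refine HasDerivAt.fun_sum fun i _ => HasDerivAt.fun_sum fun j _ => ?_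
    exact (hp' i).mul ((hψ' j).const_mul (F i j))
  convert key using 1
  · ext u
    simp [phi, Matrix.mulVec, dotProduct, Finset.mul_sum]
  · simp [Matrix.mulVec, dotProduct, Matrix.mul_apply, Fin.sum_univ_three, Matrix.transpose_apply]
    ring

lemma commA (γ : ℝ) : F1 γ * Xmat γ - Xmat γ * F1 γ = F2 γ := by
  ext i j
  fin_cases i <;> fin_cases j <;>
    simp [F1, F2, matComm, Xmat, Ymat, Matrix.mul_apply, Fin.sum_univ_three, Matrix.vecHead, Matrix.vecTail] <;> nlinarith [sin_sq_add_cos_sq γ]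

lemma commB (γ : ℝ) : F2 γ * Xmat γ - Xmat γ * F2 γ = (-(sin γ)^2) • F1 γ := by
  ext i j
  fin_cases i <;> fin_cases j <;>
    simp [F1, F2, matComm, Xmat, Ymat, Matrix.mul_apply, Fin.sum_univ_three, Matrix.vecHead, Matrix.vecTail] <;> nlinarith [sin_sq_add_cos_sq γ]

lemma commC (γ : ℝ) : F3 γ * Xmat γ - Xmat γ * F3 γ = ((sin γ)^2) • F2 γ := by
  ext i j
  fin_cases i <;> fin_cases j <;>
    simp [F2, F3, matComm, Xmat, Ymat, Matrix.mul_apply, Fin.sum_univ_three, Matrix.vecHead, Matrix.vecTail] <;> nlinarith [sin_sq_add_cos_sq γ]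

/-- Along a pure `X`-arc on an open interval `I`, the reduced variables
`φⱼ(t) = ⟨p(t), Fⱼ ψ(t)⟩` are differentiable and satisfy
`φ₁' = φ₂`, `φ₂' = −(sin γ)² φ₁`, `φ₃' = (sin γ)² φ₂`. -/
theorem stmt_2 (γ : ℝ) (hγ : γ ∈ Set.Ioo 0 (π/2)) (I : Set ℝ)
    (hIopen : IsOpen I) (hIinterval : I.OrdConnected)
    (ψ p : ℝ → Fin 3 → ℝ)
    (hψ : ∀ t ∈ I, HasDerivAt ψ (Xmat γ *ᵥ ψ t) t)
    (hp : ∀ t ∈ I, HasDerivAt p (-((Xmat γ)ᵀ *ᵥ p t)) t) :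
    ∀ t ∈ I,
      HasDerivAt (phi p ψ (F1 γ)) (phi p ψ (F2 γ) t) t ∧
      HasDerivAt (phi p ψ (F2 γ)) (-(sin γ)^2 * phi p ψ (F1 γ) t) t ∧
      HasDerivAt (phi p ψ (F3 γ)) ((sin γ)^2 * phi p ψ (F2 γ) t) t := by
  intro t ht
  have h1 := phi_hasDerivAt γ ψ p (F1 γ) t (hψ t ht) (hp t ht)
  have h2 := phi_hasDerivAt γ ψ p (F2 γ) t (hψ t ht) (hp t ht)
  have h3 := phi_hasDerivAt γ ψ p (F3 γ) t (hψ t ht) (hp t ht)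
  rw [commA] at h1
  rw [commB] at h2
  rw [commC] at h3
  refine ⟨h1, ?_, ?_⟩
  · simpa [phi, Matrix.neg_mulVec, Matrix.smul_mulVec, dotProduct_smul, dotProduct_neg,
      smul_eq_mul] using h2
  · simpa [phi, Matrix.smul_mulVec, dotProduct_smul, smul_eq_mul] using h3
end

section
/- Let I ⊆ ℝ be an open interval and let ψ, p : ℝ → ℝ³ be differentiable on I with ψ'(t) = X ψ(t) and p'(t) = −Xᵀ p(t) for all t ∈ I. Then the function φ₁(t) = ⟨p(t), (X − Y) ψ(t)⟩ is twice differentiable on I and satisfies the harmonic equation φ₁''(t) + (sin γ)² φ₁(t) = 0 for all t ∈ I. -/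
open Matrix Real

/-- The switching function `φ₁(t) = ⟨p(t), (X − Y) ψ(t)⟩`. -/
noncomputable def phi1 (γ : ℝ) (p ψ : ℝ → Fin 3 → ℝ) (t : ℝ) : ℝ :=
  p t ⬝ᵥ ((Xmat γ - Ymat) *ᵥ ψ t)

lemma deriv_bilin (X A : Matrix (Fin 3) (Fin 3) ℝ) (ψ p : ℝ → Fin 3 → ℝ) (t : ℝ)
    (hψ : HasDerivAt ψ (X *ᵥ ψ t) t) (hp : HasDerivAt p (-(Xᵀ *ᵥ p t)) t) :
    HasDerivAt (fun u => p u ⬝ᵥ (A *ᵥ ψ u)) (p t ⬝ᵥ ((A * X - X * A) *ᵥ ψ t)) t := by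
  have hψ' := hasDerivAt_pi.mp hψ
  have hp' := hasDerivAt_pi.mp hp
  have key : HasDerivAt (fun u => ∑ i, ∑ j, p u i * (A i j * ψ u j))
      (∑ i, ∑ j, ((-(Xᵀ *ᵥ p t)) i * (A i j * ψ t j) +
        p t i * (A i j * (X *ᵥ ψ t) j))) t := by
    apply HasDerivAt.fun_sum; intro i _
    apply HasDerivAt.fun_sum; intro j _
    exact (hp' i).mul ((hψ' j).const_mul (A i j))
  have hf : (fun u => p u ⬝ᵥ (A *ᵥ ψ u)) = fun u => ∑ i, ∑ j, p u i * (A i j * ψ u j) := by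
    funext u
    simp [dotProduct, mulVec, Finset.mul_sum]
  have hv : (∑ i, ∑ j, ((-(Xᵀ *ᵥ p t)) i * (A i j * ψ t j) +
        p t i * (A i j * (X *ᵥ ψ t) j))) = p t ⬝ᵥ ((A * X - X * A) *ᵥ ψ t) := by
    simp [dotProduct, mulVec, Matrix.mul_apply, transpose_apply, Fin.sum_univ_three]
    ring
  rw [hf]
  exact hv ▸ key

set_option maxHeartbeats 1000000 in
lemma comm_id (γ : ℝ) :
    ((Xmat γ - Ymat) * Xmat γ - Xmat γ * (Xmat γ - Ymat)) * Xmat γ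
      - Xmat γ * ((Xmat γ - Ymat) * Xmat γ - Xmat γ * (Xmat γ - Ymat))
      = (-(sin γ)^2) • (Xmat γ - Ymat) := by
  have h := sin_sq_add_cos_sq γ
  ext i j
  fin_cases i <;> fin_cases j <;>
    simp [Xmat, Ymat, Matrix.mul_apply, Fin.sum_univ_three, Matrix.vecHead, Matrix.vecTail,
      -mul_eq_zero] <;> nlinarith [h]

/-- Along a pure `X`-arc on an open interval `I`, the switching function
`φ₁(t) = ⟨p(t), (X − Y) ψ(t)⟩` is twice differentiable on `I` and satisfies the harmonic
equation `φ₁''(t) + (sin γ)² φ₁(t) = 0` for all `t ∈ I`. -/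
theorem stmt_3 (γ : ℝ) (hγ : γ ∈ Set.Ioo 0 (π/2)) (I : Set ℝ)
    (hIopen : IsOpen I) (hIinterval : I.OrdConnected)
    (ψ p : ℝ → Fin 3 → ℝ)
    (hψ : ∀ t ∈ I, HasDerivAt ψ (Xmat γ *ᵥ ψ t) t)
    (hp : ∀ t ∈ I, HasDerivAt p (-((Xmat γ)ᵀ *ᵥ p t)) t) :
    ∃ φ₁' : ℝ → ℝ, ∀ t ∈ I,
      HasDerivAt (phi1 γ p ψ) (φ₁' t) t ∧
      HasDerivAt φ₁' (-((sin γ)^2 * phi1 γ p ψ t)) t := by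
  refine ⟨fun t => p t ⬝ᵥ (((Xmat γ - Ymat) * Xmat γ - Xmat γ * (Xmat γ - Ymat)) *ᵥ ψ t),
    fun t ht => ?_⟩
  constructor
  · exact deriv_bilin (Xmat γ) (Xmat γ - Ymat) ψ p t (hψ t ht) (hp t ht)
  · have h2 := deriv_bilin (Xmat γ) ((Xmat γ - Ymat) * Xmat γ - Xmat γ * (Xmat γ - Ymat))
      ψ p t (hψ t ht) (hp t ht)
    rw [comm_id γ] at h2
    convert h2 using 1
    simp [phi1, Matrix.neg_mulVec, smul_mulVec, Pi.neg_apply, Pi.smul_apply, smul_eq_mul]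
end

section
/- Let γ ∈ (0, π/2), s = sin γ, and let a, b ∈ ℝ with a ≠ 0 and b ≠ 0. Let m be the differentiable solution of the X-system with m(0) = (0, a, b), and let n be the differentiable solution of the Y-system with n(0) = (0, a, b). Let τ_X = π/s, and let τ_Y ∈ (0, 2π) be determined by tan(τ_Y/2) = a/b. Then m(τ_X) = (0, −a, b) and n(τ_Y) = (0, −a, b); that is, the shortest switching-to-switching X-arc and Y-arc induce the same map (0, a, b) ↦ (0, −a, b) on switching data. -/
open Real


lemma aux_const_of_deriv_zero {f : ℝ → ℝ} (h : ∀ t, HasDerivAt f 0 t) (x : ℝ) :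
    f x = f 0 :=
  is_const_of_deriv_eq_zero (fun t => (h t).differentiableAt)
    (fun t => (h t).deriv) x 0

lemma aux_sin_mul (s t : ℝ) :
    HasDerivAt (fun t => Real.sin (s*t)) (s * Real.cos (s*t)) t := by
  have := (Real.hasDerivAt_sin (s*t)).comp t ((hasDerivAt_id t).const_mul s)
  refine this.congr_deriv ?_
  ring

lemma aux_cos_mul (s t : ℝ) :
    HasDerivAt (fun t => Real.cos (s*t)) (-s * Real.sin (s*t)) t := by
  have := (Real.hasDerivAt_cos (s*t)).comp t ((hasDerivAt_id t).const_mul s)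
  refine this.congr_deriv ?_
  ring

/-- Let `γ ∈ (0, π/2)`, `s = sin γ`, `a ≠ 0`, `b ≠ 0`. Let `m` be the
differentiable solution of the X-system (`m₁' = m₂`, `m₂' = −(sin γ)² m₁`,
`m₃' = (sin γ)² m₂`) with `m(0) = (0, a, b)`, and `n` the differentiable solution of the
Y-system (`n₁' = n₂`, `n₂' = −n₃`, `n₃' = n₂`) with `n(0) = (0, a, b)`. Let `τ_X = π/s` and
let `τ_Y ∈ (0, 2π)` satisfy `tan(τ_Y/2) = a/b`. Then `m(τ_X) = (0, −a, b)` and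
`n(τ_Y) = (0, −a, b)`: the shortest switching-to-switching X-arc and Y-arc induce the same
map `(0, a, b) ↦ (0, −a, b)` on switching data. -/
theorem stmt_10 (γ a b τY : ℝ) (hγ : γ ∈ Set.Ioo 0 (π/2)) (ha : a ≠ 0) (hb : b ≠ 0)
    (m1 m2 m3 n1 n2 n3 : ℝ → ℝ)
    (hm1 : ∀ t, HasDerivAt m1 (m2 t) t)
    (hm2 : ∀ t, HasDerivAt m2 (-(sin γ)^2 * m1 t) t)
    (hm3 : ∀ t, HasDerivAt m3 ((sin γ)^2 * m2 t) t)
    (hm10 : m1 0 = 0) (hm20 : m2 0 = a) (hm30 : m3 0 = b)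
    (hn1 : ∀ t, HasDerivAt n1 (n2 t) t)
    (hn2 : ∀ t, HasDerivAt n2 (-(n3 t)) t)
    (hn3 : ∀ t, HasDerivAt n3 (n2 t) t)
    (hn10 : n1 0 = 0) (hn20 : n2 0 = a) (hn30 : n3 0 = b)
    (hτY : τY ∈ Set.Ioo 0 (2*π)) (htanY : tan (τY/2) = a / b) :
    (m1 (π / sin γ) = 0 ∧ m2 (π / sin γ) = -a ∧ m3 (π / sin γ) = b) ∧
    (n1 τY = 0 ∧ n2 τY = -a ∧ n3 τY = b) := by
  obtain ⟨hγ0, hγ1⟩ := hγ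
  set s := sin γ with hs_def
  have hs : 0 < s := sin_pos_of_pos_of_lt_pi hγ0 (lt_trans hγ1 (by linarith [pi_pos]))
  have hs' : s ≠ 0 := ne_of_gt hs
  -- X-system explicit solution
  have hXu : ∀ t, m1 t = a/s * Real.sin (s*t) ∧ m2 t = a * Real.cos (s*t) := by
    set u : ℝ → ℝ := fun t => m1 t - a/s * Real.sin (s*t) with hu_def
    set v : ℝ → ℝ := fun t => m2 t - a * Real.cos (s*t) with hv_def
    have hu : ∀ t, HasDerivAt u (v t) t := by
      intro t
      have := (hm1 t).sub ((aux_sin_mul s t).const_mul (a/s))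
      refine this.congr_deriv ?_
      simp [hv_def]
      field_simp
    have hv : ∀ t, HasDerivAt v (-s^2 * u t) t := by
      intro t
      have := (hm2 t).sub ((aux_cos_mul s t).const_mul a)
      refine this.congr_deriv ?_
      simp [hu_def]
      field_simp
      ring
    have hE : ∀ t, HasDerivAt (fun t => s^2 * (u t)^2 + (v t)^2)
        (s^2 * (2 * u t * v t) + 2 * v t * (-s^2 * u t)) t := by
      intro t
      exact ((((hu t).pow 2).const_mul (s^2)).add (((hv t).pow 2))).congr_deriv (by ring)
    have hE0 : ∀ t, HasDerivAt (fun t => s^2 * (u t)^2 + (v t)^2) 0 t := by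
      intro t
      exact (hE t).congr_deriv (by ring)
    have hEconst : ∀ t, s^2 * (u t)^2 + (v t)^2 = 0 := by
      intro t
      have := aux_const_of_deriv_zero hE0 t
      simp only [hu_def, hv_def] at this ⊢
      simp [hm10, hm20] at this
      simpa [hu_def, hv_def] using this
    intro t
    have h := hEconst t
    have hu2 : u t ^ 2 = 0 := by nlinarith [sq_nonneg (v t), sq_nonneg (u t), pow_pos hs 2]
    have h1 : u t = 0 := by
      exact pow_eq_zero_iff two_ne_zero |>.mp hu2
    have h2 : v t = 0 := by
      have : v t ^ 2 = 0 := by nlinarith [sq_nonneg (u t), pow_pos hs 2]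
      exact pow_eq_zero_iff two_ne_zero |>.mp this
    constructor
    · have := h1; simp [hu_def] at this; linarith
    · have := h2; simp [hv_def] at this; linarith
  -- m3
  have hXw : ∀ t, m3 t = b + s * a * Real.sin (s*t) := by
    set w : ℝ → ℝ := fun t => m3 t - (b + s * a * Real.sin (s*t)) with hw_def
    have hw : ∀ t, HasDerivAt w 0 t := by
      intro t
      have := (hm3 t).sub (((aux_sin_mul s t).const_mul (s*a)).const_add b)
      have h2 := (hXu t).2
      refine this.congr_deriv ?_
      rw [h2]
      ring
    intro t
    have := aux_const_of_deriv_zero hw t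
    simp only [hw_def] at this
    simp [hm30] at this
    linarith
  -- evaluate at π/s
  have hπs : s * (π / s) = π := by field_simp
  have hmX : m1 (π / s) = 0 ∧ m2 (π / s) = -a ∧ m3 (π / s) = b := by
    refine ⟨?_, ?_, ?_⟩
    · rw [(hXu _).1, hπs]; simp
    · rw [(hXu _).2, hπs]; simp
    · rw [hXw _, hπs]; simp
  -- Y-system explicit solution
  have hYu : ∀ t, n2 t = a * Real.cos t - b * Real.sin t ∧
      n3 t = a * Real.sin t + b * Real.cos t := by
    set u : ℝ → ℝ := fun t => n2 t - (a * Real.cos t - b * Real.sin t) with hu_def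
    set w : ℝ → ℝ := fun t => n3 t - (a * Real.sin t + b * Real.cos t) with hw_def
    have hu : ∀ t, HasDerivAt u (-(w t)) t := by
      intro t
      have := (hn2 t).sub (((Real.hasDerivAt_cos t).const_mul a).sub ((Real.hasDerivAt_sin t).const_mul b))
      refine this.congr_deriv ?_
      simp [hw_def]
      ring
    have hw : ∀ t, HasDerivAt w (u t) t := by
      intro t
      have := (hn3 t).sub (((Real.hasDerivAt_sin t).const_mul a).add ((Real.hasDerivAt_cos t).const_mul b))
      refine this.congr_deriv ?_
      simp [hu_def]
      ring
    have hE0 : ∀ t, HasDerivAt (fun t => (u t)^2 + (w t)^2) 0 t := by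
      intro t
      exact (((hu t).pow 2).add ((hw t).pow 2)).congr_deriv (by ring)
    have hEconst : ∀ t, (u t)^2 + (w t)^2 = 0 := by
      intro t
      have := aux_const_of_deriv_zero hE0 t
      simp only [hu_def, hw_def] at this
      simp [hn20, hn30] at this
      simpa [hu_def, hw_def] using this
    intro t
    have h := hEconst t
    have h1 : u t = 0 := by
      have : u t ^ 2 = 0 := by nlinarith [sq_nonneg (w t)]
      exact pow_eq_zero_iff two_ne_zero |>.mp this
    have h2 : w t = 0 := by
      have : w t ^ 2 = 0 := by nlinarith [sq_nonneg (u t)]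
      exact pow_eq_zero_iff two_ne_zero |>.mp this
    constructor
    · have := h1; simp [hu_def] at this; linarith
    · have := h2; simp [hw_def] at this; linarith
  have hYn1 : ∀ t, n1 t = a * Real.sin t + b * Real.cos t - b := by
    set w : ℝ → ℝ := fun t => n1 t - (a * Real.sin t + b * Real.cos t - b) with hw_def
    have hw : ∀ t, HasDerivAt w 0 t := by
      intro t
      have := (hn1 t).sub ((((Real.hasDerivAt_sin t).const_mul a).add ((Real.hasDerivAt_cos t).const_mul b)).sub_const b)
      refine this.congr_deriv ?_
      rw [(hYu t).1]
      ring
    intro t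
    have := aux_const_of_deriv_zero hw t
    simp only [hw_def] at this
    simp [hn10] at this
    linarith
  -- trig identities at τY
  have hc : Real.cos (τY/2) ≠ 0 := by
    intro h
    rw [Real.tan_eq_sin_div_cos, h, div_zero] at htanY
    exact (div_ne_zero ha hb) htanY.symm
  have h1 : a * Real.cos (τY/2) = Real.sin (τY/2) * b := by
    rw [Real.tan_eq_sin_div_cos] at htanY
    field_simp at htanY
    linarith [htanY]
  have h2 : Real.sin (τY/2)^2 + Real.cos (τY/2)^2 = 1 := Real.sin_sq_add_cos_sq _
  have hsin : Real.sin τY = 2 * Real.sin (τY/2) * Real.cos (τY/2) := by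
    rw [show τY = 2 * (τY/2) by ring, Real.sin_two_mul]
    ring_nf
  have hcos : Real.cos τY = 2 * Real.cos (τY/2)^2 - 1 := by
    rw [show τY = 2 * (τY/2) by ring, Real.cos_two_mul]
    ring_nf
  have hnY : n1 τY = 0 ∧ n2 τY = -a ∧ n3 τY = b := by
    refine ⟨?_, ?_, ?_⟩
    · rw [hYn1 τY, hsin, hcos]
      linear_combination 2 * Real.sin (τY/2) * h1 + 2 * b * h2
    · rw [(hYu τY).1, hsin, hcos]
      linear_combination 2 * Real.cos (τY/2) * h1
    · rw [(hYu τY).2, hsin, hcos]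
      linear_combination 2 * Real.sin (τY/2) * h1 + 2 * b * h2
  exact ⟨hmX, hnY⟩
end

section
/- Let γ ∈ (0, π/2), s = sin γ, and let a, b ∈ ℝ with a ≠ 0 and b ≠ 0. Let ℓ₁, ℓ₂ ∈ (0, 2π) satisfy tan(ℓ₁/2) = a/b and tan(ℓ₂/2) = a/b, and set T = ℓ₁ + π/s + ℓ₂. Suppose m : [0, T] → ℝ³ is continuous, satisfies the Y-system on [0, ℓ₁] and on [ℓ₁ + π/s, T], satisfies the X-system on [ℓ₁, ℓ₁ + π/s], and m(0) = (0, a, b). Then m₁(ℓ₁) = 0, m₁(ℓ₁ + π/s) = 0, m(T) = (0, −a, b), and T > π/s. In other words, the three-bang block Y(ℓ₁) X(π/s) Y(ℓ₂) induces the same map (0, a, b) ↦ (0, −a, b) on switching data as a single switching-to-switching X-arc of duration π/s, but takes strictly longer time. -/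
open Real


lemma hasDerivAt_sin_shift (c t : ℝ) :
    HasDerivAt (fun t => Real.sin (t - c)) (Real.cos (t - c)) t := by
  simpa [Function.comp_def] using (Real.hasDerivAt_sin (t - c)).comp t ((hasDerivAt_id t).sub_const c)

lemma hasDerivAt_cos_shift (c t : ℝ) :
    HasDerivAt (fun t => Real.cos (t - c)) (-Real.sin (t - c)) t := by
  simpa [Function.comp_def] using (Real.hasDerivAt_cos (t - c)).comp t ((hasDerivAt_id t).sub_const c)

lemma hasDerivAt_sin_scale (s c t : ℝ) :
    HasDerivAt (fun t => Real.sin (s * (t - c))) (s * Real.cos (s * (t - c))) t := by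
  have h : HasDerivAt (fun t => s * (t - c)) s t := by
    simpa using ((hasDerivAt_id t).sub_const c).const_mul s
  simpa [mul_comm, Function.comp_def] using (Real.hasDerivAt_sin (s * (t - c))).comp t h

lemma hasDerivAt_cos_scale (s c t : ℝ) :
    HasDerivAt (fun t => Real.cos (s * (t - c))) (-(s * Real.sin (s * (t - c)))) t := by
  have h : HasDerivAt (fun t => s * (t - c)) s t := by
    simpa using ((hasDerivAt_id t).sub_const c).const_mul s
  have := (Real.hasDerivAt_cos (s * (t - c))).comp t h
  rw [Function.comp_def] at this
  exact this.congr_deriv (by ring)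

lemma ode3_unique (v : ℝ → (ℝ × ℝ × ℝ) → (ℝ × ℝ × ℝ))
    (hv : ∀ t, LipschitzWith 1 (v t)) {c d : ℝ}
    (f g : ℝ → ℝ × ℝ × ℝ)
    (hf : ContinuousOn f (Set.Icc c d))
    (hf' : ∀ t ∈ Set.Icc c d, HasDerivWithinAt f (v t (f t)) (Set.Icc c d) t)
    (hg : ContinuousOn g (Set.Icc c d))
    (hg' : ∀ t ∈ Set.Icc c d, HasDerivWithinAt g (v t (g t)) (Set.Icc c d) t)
    (h0 : f c = g c) : Set.EqOn f g (Set.Icc c d) := by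
  apply ODE_solution_unique (K := 1) hv hf ?_ hg ?_ h0
  · intro t ht
    exact (hf' t ⟨ht.1, ht.2.le⟩).mono_of_mem_nhdsWithin (Icc_mem_nhdsGE_of_mem ht)
  · intro t ht
    exact (hg' t ⟨ht.1, ht.2.le⟩).mono_of_mem_nhdsWithin (Icc_mem_nhdsGE_of_mem ht)

/-- Explicit solution of the Y-system on an interval. -/
lemma Y_sol {c d p q r : ℝ} (m1 m2 m3 : ℝ → ℝ)
    (hc1 : ContinuousOn m1 (Set.Icc c d)) (hc2 : ContinuousOn m2 (Set.Icc c d))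
    (hc3 : ContinuousOn m3 (Set.Icc c d))
    (hY : ∀ t ∈ Set.Icc c d,
      HasDerivWithinAt m1 (m2 t) (Set.Icc c d) t ∧
      HasDerivWithinAt m2 (-(m3 t)) (Set.Icc c d) t ∧
      HasDerivWithinAt m3 (m2 t) (Set.Icc c d) t)
    (h1 : m1 c = p) (h2 : m2 c = q) (h3 : m3 c = r) :
    ∀ t ∈ Set.Icc c d,
      m1 t = p + q * Real.sin (t - c) + r * (Real.cos (t - c) - 1) ∧
      m2 t = q * Real.cos (t - c) - r * Real.sin (t - c) ∧
      m3 t = q * Real.sin (t - c) + r * Real.cos (t - c) := by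
  rcases le_or_gt c d with hcd | hcd
  swap
  · intro t ht; exact absurd (ht.1.trans ht.2) (not_le.mpr hcd)
  set g : ℝ → ℝ × ℝ × ℝ := fun t =>
    (p + q * Real.sin (t - c) + r * (Real.cos (t - c) - 1),
     q * Real.cos (t - c) - r * Real.sin (t - c),
     q * Real.sin (t - c) + r * Real.cos (t - c)) with hg
  set f : ℝ → ℝ × ℝ × ℝ := fun t => (m1 t, m2 t, m3 t) with hf
  set v : ℝ → (ℝ × ℝ × ℝ) → (ℝ × ℝ × ℝ) := fun _ pp => (pp.2.1, -pp.2.2, pp.2.1) with hv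
  have lipY : ∀ t : ℝ, LipschitzWith 1 (v t) := by
    intro t
    apply LipschitzWith.of_dist_le_mul
    intro x y
    simp only [v, Prod.dist_eq, Real.dist_eq, NNReal.coe_one, one_mul]
    have h1' : |x.2.1 - y.2.1| ≤ max |x.1 - y.1| (max |x.2.1 - y.2.1| |x.2.2 - y.2.2|) :=
      le_max_of_le_right (le_max_left _ _)
    have h2' : |(-x.2.2) - (-y.2.2)| ≤ max |x.1 - y.1| (max |x.2.1 - y.2.1| |x.2.2 - y.2.2|) := by
      rw [show (-x.2.2) - (-y.2.2) = -(x.2.2 - y.2.2) by ring, abs_neg]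
      exact le_max_of_le_right (le_max_right _ _)
    exact max_le h1' (max_le h2' h1')
  have key : Set.EqOn f g (Set.Icc c d) := by
    apply ode3_unique v lipY f g
    · exact (hc1.prodMk (hc2.prodMk hc3))
    · intro t ht
      exact ((hY t ht).1.prodMk (((hY t ht).2.1).prodMk (hY t ht).2.2))
    · apply ContinuousOn.prodMk (by fun_prop) (ContinuousOn.prodMk (by fun_prop) (by fun_prop))
    · intro t ht
      have d1 : HasDerivAt (fun t => p + q * Real.sin (t - c) + r * (Real.cos (t - c) - 1))
          (q * Real.cos (t - c) - r * Real.sin (t - c)) t := by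
        have := (((hasDerivAt_sin_shift c t).const_mul q).const_add p).add
          (((hasDerivAt_cos_shift c t).sub_const 1).const_mul r)
        exact this.congr_deriv (by ring)
      have d2 : HasDerivAt (fun t => q * Real.cos (t - c) - r * Real.sin (t - c))
          (-(q * Real.sin (t - c) + r * Real.cos (t - c))) t := by
        have := ((hasDerivAt_cos_shift c t).const_mul q).sub
          ((hasDerivAt_sin_shift c t).const_mul r)
        exact this.congr_deriv (by ring)
      have d3 : HasDerivAt (fun t => q * Real.sin (t - c) + r * Real.cos (t - c))
          (q * Real.cos (t - c) - r * Real.sin (t - c)) t := by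
        have := ((hasDerivAt_sin_shift c t).const_mul q).add
          ((hasDerivAt_cos_shift c t).const_mul r)
        exact this.congr_deriv (by ring)
      exact ((d1.prodMk (d2.prodMk d3)).hasDerivWithinAt)
    · simp [f, g, hv, h1, h2, h3]
  intro t ht
  have := key ht
  simp only [f, g, Prod.mk.injEq] at this
  exact ⟨this.1, this.2.1, this.2.2⟩

/-- Explicit solution of the X-system on an interval with initial value `(0, q, r)`. -/
lemma X_sol {s c d q r : ℝ} (hs0 : 0 < s) (hs1 : s ≤ 1) (m1 m2 m3 : ℝ → ℝ)
    (hc1 : ContinuousOn m1 (Set.Icc c d)) (hc2 : ContinuousOn m2 (Set.Icc c d))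
    (hc3 : ContinuousOn m3 (Set.Icc c d))
    (hX : ∀ t ∈ Set.Icc c d,
      HasDerivWithinAt m1 (m2 t) (Set.Icc c d) t ∧
      HasDerivWithinAt m2 (-s^2 * m1 t) (Set.Icc c d) t ∧
      HasDerivWithinAt m3 (s^2 * m2 t) (Set.Icc c d) t)
    (h1 : m1 c = 0) (h2 : m2 c = q) (h3 : m3 c = r) :
    ∀ t ∈ Set.Icc c d,
      m1 t = (q / s) * Real.sin (s * (t - c)) ∧
      m2 t = q * Real.cos (s * (t - c)) ∧
      m3 t = r + s * q * Real.sin (s * (t - c)) := by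
  have hsq : s ^ 2 ≤ 1 := by nlinarith
  set g : ℝ → ℝ × ℝ × ℝ := fun t =>
    ((q / s) * Real.sin (s * (t - c)),
     q * Real.cos (s * (t - c)),
     r + s * q * Real.sin (s * (t - c))) with hg
  set f : ℝ → ℝ × ℝ × ℝ := fun t => (m1 t, m2 t, m3 t) with hf
  set v : ℝ → (ℝ × ℝ × ℝ) → (ℝ × ℝ × ℝ) :=
    fun _ pp => (pp.2.1, -s^2 * pp.1, s^2 * pp.2.1) with hv
  have lipX : ∀ t : ℝ, LipschitzWith 1 (v t) := by
    intro t
    apply LipschitzWith.of_dist_le_mul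
    intro x y
    simp only [v, Prod.dist_eq, Real.dist_eq, NNReal.coe_one, one_mul]
    set D := max |x.1 - y.1| (max |x.2.1 - y.2.1| |x.2.2 - y.2.2|) with hD
    have h1' : |x.2.1 - y.2.1| ≤ D := le_max_of_le_right (le_max_left _ _)
    have hx1 : |x.1 - y.1| ≤ D := le_max_left _ _
    have hs0' : (0:ℝ) ≤ s^2 := sq_nonneg s
    have h2' : |(-s^2 * x.1) - (-s^2 * y.1)| ≤ D := by
      rw [show (-s^2 * x.1) - (-s^2 * y.1) = -(s^2 * (x.1 - y.1)) by ring, abs_neg, abs_mul,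
        abs_of_nonneg hs0']
      calc s^2 * |x.1 - y.1| ≤ 1 * |x.1 - y.1| :=
            mul_le_mul_of_nonneg_right hsq (abs_nonneg _)
        _ ≤ D := by rw [one_mul]; exact hx1
    have h3' : |s^2 * x.2.1 - s^2 * y.2.1| ≤ D := by
      rw [show s^2 * x.2.1 - s^2 * y.2.1 = s^2 * (x.2.1 - y.2.1) by ring, abs_mul,
        abs_of_nonneg hs0']
      calc s^2 * |x.2.1 - y.2.1| ≤ 1 * |x.2.1 - y.2.1| :=
            mul_le_mul_of_nonneg_right hsq (abs_nonneg _)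
        _ ≤ D := by rw [one_mul]; exact h1'
    exact max_le h1' (max_le h2' h3')
  have hsne : s ≠ 0 := ne_of_gt hs0
  have key : Set.EqOn f g (Set.Icc c d) := by
    apply ode3_unique v lipX f g
    · exact (hc1.prodMk (hc2.prodMk hc3))
    · intro t ht
      exact ((hX t ht).1.prodMk (((hX t ht).2.1).prodMk (hX t ht).2.2))
    · apply ContinuousOn.prodMk (by fun_prop) (ContinuousOn.prodMk (by fun_prop) (by fun_prop))
    · intro t ht
      have d1 : HasDerivAt (fun t => (q / s) * Real.sin (s * (t - c)))
          (q * Real.cos (s * (t - c))) t := by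
        have := (hasDerivAt_sin_scale s c t).const_mul (q / s)
        exact this.congr_deriv (by field_simp)
      have d2 : HasDerivAt (fun t => q * Real.cos (s * (t - c)))
          (-s^2 * ((q / s) * Real.sin (s * (t - c)))) t := by
        have := (hasDerivAt_cos_scale s c t).const_mul q
        exact this.congr_deriv (by field_simp)
      have d3 : HasDerivAt (fun t => r + s * q * Real.sin (s * (t - c)))
          (s^2 * (q * Real.cos (s * (t - c)))) t := by
        have := ((hasDerivAt_sin_scale s c t).const_mul (s * q)).const_add r
        exact this.congr_deriv (by ring)
      exact ((d1.prodMk (d2.prodMk d3)).hasDerivWithinAt)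
    · simp [f, g, hv, h1, h2, h3]
  intro t ht
  have := key ht
  simp only [f, g, Prod.mk.injEq] at this
  exact ⟨this.1, this.2.1, this.2.2⟩

lemma tan_half_identities {a b ℓ : ℝ} (ha : a ≠ 0) (hb : b ≠ 0) (htan : Real.tan (ℓ/2) = a/b) :
    a * Real.sin ℓ + b * (Real.cos ℓ - 1) = 0 ∧
    a * Real.cos ℓ - b * Real.sin ℓ = -a ∧
    a * Real.sin ℓ + b * Real.cos ℓ = b := by
  set S := Real.sin (ℓ/2) with hS
  set C := Real.cos (ℓ/2) with hC
  have hCne : C ≠ 0 := by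
    intro h0
    rw [Real.tan_eq_sin_div_cos, ← hS, ← hC, h0, div_zero] at htan
    exact ha (by field_simp at htan; linarith [htan.symm] )
  have hkey : a * C = b * S := by
    rw [Real.tan_eq_sin_div_cos, ← hS, ← hC] at htan
    field_simp at htan
    linarith
  have h2 : (2:ℝ) * (ℓ/2) = ℓ := by ring
  have hsl : Real.sin ℓ = 2 * S * C := by rw [← h2, Real.sin_two_mul]
  have hcl : Real.cos ℓ = 2 * C^2 - 1 := by rw [← h2, Real.cos_two_mul]
  have pyth : S^2 + C^2 = 1 := Real.sin_sq_add_cos_sq (ℓ/2)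
  rw [hsl, hcl]
  refine ⟨?_, ?_, ?_⟩
  · linear_combination (2*S) * hkey + 2*b*pyth
  · linear_combination (2*C) * hkey
  · linear_combination (2*S) * hkey + 2*b*pyth


/-- Let `γ ∈ (0, π/2)`, `s = sin γ`, `a ≠ 0`, `b ≠ 0`. Let
`ℓ₁, ℓ₂ ∈ (0, 2π)` satisfy `tan(ℓ₁/2) = a/b` and `tan(ℓ₂/2) = a/b`, and set
`T = ℓ₁ + π/s + ℓ₂`. Suppose `m : [0, T] → ℝ³` is continuous, satisfies the Y-system
on `[0, ℓ₁]` and on `[ℓ₁ + π/s, T]`, satisfies the X-system on `[ℓ₁, ℓ₁ + π/s]`, and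
`m(0) = (0, a, b)`. Then `m₁(ℓ₁) = 0`, `m₁(ℓ₁ + π/s) = 0`, `m(T) = (0, −a, b)`, and
`T > π/s`: the three-bang block `Y(ℓ₁) X(π/s) Y(ℓ₂)` induces the same map
`(0, a, b) ↦ (0, −a, b)` on switching data as a single switching-to-switching X-arc of
duration `π/s`, but takes strictly longer time. -/
theorem stmt_14 (γ a b ℓ₁ ℓ₂ T : ℝ) (hγ : γ ∈ Set.Ioo 0 (π/2)) (ha : a ≠ 0) (hb : b ≠ 0)
    (hℓ₁ : ℓ₁ ∈ Set.Ioo 0 (2*π)) (hℓ₂ : ℓ₂ ∈ Set.Ioo 0 (2*π))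
    (htan1 : tan (ℓ₁/2) = a / b) (htan2 : tan (ℓ₂/2) = a / b)
    (hT : T = ℓ₁ + π / sin γ + ℓ₂)
    (m1 m2 m3 : ℝ → ℝ)
    (hc1 : ContinuousOn m1 (Set.Icc 0 T))
    (hc2 : ContinuousOn m2 (Set.Icc 0 T))
    (hc3 : ContinuousOn m3 (Set.Icc 0 T))
    -- Y-system on [0, ℓ₁]
    (hYa : ∀ t ∈ Set.Icc 0 ℓ₁,
      HasDerivWithinAt m1 (m2 t) (Set.Icc 0 ℓ₁) t ∧
      HasDerivWithinAt m2 (-(m3 t)) (Set.Icc 0 ℓ₁) t ∧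
      HasDerivWithinAt m3 (m2 t) (Set.Icc 0 ℓ₁) t)
    -- X-system on [ℓ₁, ℓ₁ + π/s]
    (hX : ∀ t ∈ Set.Icc ℓ₁ (ℓ₁ + π / sin γ),
      HasDerivWithinAt m1 (m2 t) (Set.Icc ℓ₁ (ℓ₁ + π / sin γ)) t ∧
      HasDerivWithinAt m2 (-(sin γ)^2 * m1 t) (Set.Icc ℓ₁ (ℓ₁ + π / sin γ)) t ∧
      HasDerivWithinAt m3 ((sin γ)^2 * m2 t) (Set.Icc ℓ₁ (ℓ₁ + π / sin γ)) t)
    -- Y-system on [ℓ₁ + π/s, T]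
    (hYb : ∀ t ∈ Set.Icc (ℓ₁ + π / sin γ) T,
      HasDerivWithinAt m1 (m2 t) (Set.Icc (ℓ₁ + π / sin γ) T) t ∧
      HasDerivWithinAt m2 (-(m3 t)) (Set.Icc (ℓ₁ + π / sin γ) T) t ∧
      HasDerivWithinAt m3 (m2 t) (Set.Icc (ℓ₁ + π / sin γ) T) t)
    (h10 : m1 0 = 0) (h20 : m2 0 = a) (h30 : m3 0 = b) :
    m1 ℓ₁ = 0 ∧
    m1 (ℓ₁ + π / sin γ) = 0 ∧
    (m1 T = 0 ∧ m2 T = -a ∧ m3 T = b) ∧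
    T > π / sin γ := by
  have hγ2 : γ < π := lt_trans hγ.2 (by linarith [Real.pi_pos])
  set s := Real.sin γ with hsdef
  have hs0 : 0 < s := Real.sin_pos_of_pos_of_lt_pi hγ.1 hγ2
  have hs1 : s ≤ 1 := Real.sin_le_one γ
  have hπs : 0 < π / s := div_pos Real.pi_pos hs0
  have hl1 : 0 < ℓ₁ := hℓ₁.1
  have hl2 : 0 < ℓ₂ := hℓ₂.1
  have hord1 : (0:ℝ) ≤ ℓ₁ := hl1.le
  have hord2 : ℓ₁ ≤ ℓ₁ + π / s := by linarith
  have hord3 : ℓ₁ + π / s ≤ T := by rw [hT]; linarith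
  have hsub1 : Set.Icc 0 ℓ₁ ⊆ Set.Icc 0 T := Set.Icc_subset_Icc le_rfl (by linarith)
  have hsub2 : Set.Icc ℓ₁ (ℓ₁ + π / s) ⊆ Set.Icc 0 T :=
    Set.Icc_subset_Icc hord1 hord3
  have hsub3 : Set.Icc (ℓ₁ + π / s) T ⊆ Set.Icc 0 T :=
    Set.Icc_subset_Icc (by linarith) le_rfl
  -- identities from tan conditions
  obtain ⟨id11, id12, id13⟩ := tan_half_identities ha hb htan1
  obtain ⟨id21, id22, id23⟩ := tan_half_identities ha hb htan2
  -- Arc 1 : Y-system on [0, ℓ₁]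
  have arc1 := Y_sol (p := 0) (q := a) (r := b) m1 m2 m3
    (hc1.mono hsub1) (hc2.mono hsub1) (hc3.mono hsub1) hYa h10 h20 h30
  obtain ⟨e11, e12, e13⟩ := arc1 ℓ₁ ⟨hord1, le_rfl⟩
  rw [sub_zero] at e11 e12 e13
  have v11 : m1 ℓ₁ = 0 := by rw [e11]; linarith
  have v12 : m2 ℓ₁ = -a := by rw [e12]; linarith
  have v13 : m3 ℓ₁ = b := by rw [e13]; linarith
  -- Arc 2 : X-system on [ℓ₁, ℓ₁ + π/s]
  have arc2 := X_sol (q := -a) (r := b) hs0 hs1 m1 m2 m3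
    (hc1.mono hsub2) (hc2.mono hsub2) (hc3.mono hsub2) hX v11 v12 v13
  obtain ⟨e21, e22, e23⟩ := arc2 (ℓ₁ + π / s) ⟨hord2, le_rfl⟩
  have hπarg : s * (ℓ₁ + π / s - ℓ₁) = π := by
    field_simp; ring
  simp only [hπarg, Real.sin_pi, Real.cos_pi] at e21 e22 e23
  have v21 : m1 (ℓ₁ + π / s) = 0 := by rw [e21]; ring
  have v22 : m2 (ℓ₁ + π / s) = a := by rw [e22]; ring
  have v23 : m3 (ℓ₁ + π / s) = b := by rw [e23]; ring
  -- Arc 3 : Y-system on [ℓ₁ + π/s, T]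
  have arc3 := Y_sol (p := 0) (q := a) (r := b) m1 m2 m3
    (hc1.mono hsub3) (hc2.mono hsub3) (hc3.mono hsub3) hYb v21 v22 v23
  obtain ⟨e31, e32, e33⟩ := arc3 T ⟨hord3, le_rfl⟩
  have hTsub : T - (ℓ₁ + π / s) = ℓ₂ := by rw [hT]; ring
  rw [hTsub] at e31 e32 e33
  refine ⟨v11, v21, ⟨?_, ?_, ?_⟩, ?_⟩
  · rw [e31]; linarith
  · rw [e32]; linarith
  · rw [e33]; linarith
  · rw [hT]; linarith
end

section
/- Let γ ∈ (0, π/2), s = sin γ, and let a, b ∈ ℝ with a ≠ 0 and b ≠ 0. Let ℓ ∈ (0, 2π) satisfy tan(ℓ/2) = −a/b, and set T = 2π/s + ℓ. Suppose m : [0, T] → ℝ³ is continuous, satisfies the X-system on [0, π/s] and on [π/s + ℓ, T], satisfies the Y-system on [π/s, π/s + ℓ], and m(0) = (0, a, b). Then m₁(π/s) = 0, m₁(π/s + ℓ) = 0, m(T) = (0, −a, b), and T > τ for every τ ∈ (0, 2π); in particular the three-bang block X(π/s) Y(ℓ) X(π/s) induces the same map (0, a, b) ↦ (0, −a, b) on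 switching data as a single switching-to-switching Y-arc, but takes strictly longer time than any Y-arc of duration less than 2π. -/
open Real

lemma constOn {f : ℝ → ℝ} {p q : ℝ}
    (hf : ∀ t ∈ Set.Icc p q, HasDerivWithinAt f 0 (Set.Icc p q) t) :
    ∀ t ∈ Set.Icc p q, f t = f p := by
  intro t ht
  have hcont : ContinuousOn f (Set.Icc p q) := fun x hx => (hf x hx).continuousWithinAt
  refine constant_of_has_deriv_right_zero hcont (fun x hx => ?_) t ht
  have h1 : HasDerivWithinAt f 0 (Set.Icc x q) x :=
    (hf x ⟨hx.1, hx.2.le⟩).mono (Set.Icc_subset_Icc hx.1 le_rfl)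
  exact h1.mono_of_mem_nhdsWithin (Icc_mem_nhdsGE hx.2)

lemma xArc {s p q : ℝ} (hs : 0 < s) (hq : q = p + π / s) {m1 m2 m3 : ℝ → ℝ}
    (hX : ∀ t ∈ Set.Icc p q,
      HasDerivWithinAt m1 (m2 t) (Set.Icc p q) t ∧
      HasDerivWithinAt m2 (-s^2 * m1 t) (Set.Icc p q) t ∧
      HasDerivWithinAt m3 (s^2 * m2 t) (Set.Icc p q) t)
    (h1 : m1 p = 0) :
    m1 q = 0 ∧ m2 q = -(m2 p) ∧ m3 q = m3 p := by
  have hpq : p ≤ q := by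
    rw [hq]; nlinarith [pi_pos, div_pos pi_pos hs]
  have hqmem : q ∈ Set.Icc p q := ⟨hpq, le_rfl⟩
  have hcos : ∀ t : ℝ, HasDerivAt (fun t => Real.cos (s*(t-p))) (-Real.sin (s*(t-p)) * s) t := by
    intro t
    have h : HasDerivAt (fun t => s*(t-p)) s t := by
      simpa using ((hasDerivAt_id t).sub_const p).const_mul s
    simpa using h.cos
  have hsin : ∀ t : ℝ, HasDerivAt (fun t => Real.sin (s*(t-p))) (Real.cos (s*(t-p)) * s) t := by
    intro t
    have h : HasDerivAt (fun t => s*(t-p)) s t := by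
      simpa using ((hasDerivAt_id t).sub_const p).const_mul s
    simpa using h.sin
  have hA : ∀ t ∈ Set.Icc p q,
      HasDerivWithinAt (fun t => s * m1 t * Real.cos (s*(t-p)) - m2 t * Real.sin (s*(t-p)))
        0 (Set.Icc p q) t := by
    intro t ht
    have h := (((hX t ht).1.const_mul s).mul (hcos t).hasDerivWithinAt).sub
      ((hX t ht).2.1.mul (hsin t).hasDerivWithinAt)
    exact h.congr_deriv (by ring)
  have hB : ∀ t ∈ Set.Icc p q,
      HasDerivWithinAt (fun t => s * m1 t * Real.sin (s*(t-p)) + m2 t * Real.cos (s*(t-p)))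
        0 (Set.Icc p q) t := by
    intro t ht
    have h := (((hX t ht).1.const_mul s).mul (hsin t).hasDerivWithinAt).add
      ((hX t ht).2.1.mul (hcos t).hasDerivWithinAt)
    exact h.congr_deriv (by ring)
  have hC : ∀ t ∈ Set.Icc p q,
      HasDerivWithinAt (fun t => m3 t - s^2 * m1 t) 0 (Set.Icc p q) t := by
    intro t ht
    have h := (hX t ht).2.2.sub ((hX t ht).1.const_mul (s^2))
    exact h.congr_deriv (by ring)
  have hAq := constOn hA q hqmem
  have hBq := constOn hB q hqmem
  have hCq := constOn hC q hqmem
  have hsq : s * (q - p) = π := by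
    rw [hq]; field_simp; ring
  simp only [hsq, sub_self, mul_zero, Real.cos_pi, Real.sin_pi, Real.cos_zero,
    Real.sin_zero] at hAq hBq hCq
  rw [h1] at hAq hCq
  have hm1 : m1 q = 0 := by
    have h2 : s * m1 q = 0 := by linarith
    rcases mul_eq_zero.1 h2 with h | h
    · exact absurd h hs.ne'
    · exact h
  rw [hm1] at hCq
  exact ⟨hm1, by linarith, by linarith⟩

lemma yArc {p q ℓ : ℝ} (hℓ : 0 < ℓ) (hq : q = p + ℓ) {m1 m2 m3 : ℝ → ℝ}
    (hY : ∀ t ∈ Set.Icc p q,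
      HasDerivWithinAt m1 (m2 t) (Set.Icc p q) t ∧
      HasDerivWithinAt m2 (-(m3 t)) (Set.Icc p q) t ∧
      HasDerivWithinAt m3 (m2 t) (Set.Icc p q) t) :
    m1 q = m1 p + m2 p * Real.sin ℓ + m3 p * (Real.cos ℓ - 1) ∧
    m2 q = m2 p * Real.cos ℓ - m3 p * Real.sin ℓ ∧
    m3 q = m2 p * Real.sin ℓ + m3 p * Real.cos ℓ := by
  have hpq : p ≤ q := by rw [hq]; linarith
  have hqmem : q ∈ Set.Icc p q := ⟨hpq, le_rfl⟩
  have hcos : ∀ t : ℝ, HasDerivAt (fun t => Real.cos (t-p)) (-Real.sin (t-p)) t := by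
    intro t
    simpa using ((hasDerivAt_id t).sub_const p).cos
  have hsin : ∀ t : ℝ, HasDerivAt (fun t => Real.sin (t-p)) (Real.cos (t-p)) t := by
    intro t
    simpa using ((hasDerivAt_id t).sub_const p).sin
  have hP : ∀ t ∈ Set.Icc p q,
      HasDerivWithinAt (fun t => m1 t - m3 t) 0 (Set.Icc p q) t := by
    intro t ht
    have h := (hY t ht).1.sub (hY t ht).2.2
    exact h.congr_deriv (by ring)
  have hQ : ∀ t ∈ Set.Icc p q,
      HasDerivWithinAt (fun t => m2 t * Real.cos (t-p) + m3 t * Real.sin (t-p))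
        0 (Set.Icc p q) t := by
    intro t ht
    have h := ((hY t ht).2.1.mul (hcos t).hasDerivWithinAt).add
      ((hY t ht).2.2.mul (hsin t).hasDerivWithinAt)
    exact h.congr_deriv (by ring)
  have hR : ∀ t ∈ Set.Icc p q,
      HasDerivWithinAt (fun t => m3 t * Real.cos (t-p) - m2 t * Real.sin (t-p))
        0 (Set.Icc p q) t := by
    intro t ht
    have h := ((hY t ht).2.2.mul (hcos t).hasDerivWithinAt).sub
      ((hY t ht).2.1.mul (hsin t).hasDerivWithinAt)
    exact h.congr_deriv (by ring)
  have hPq := constOn hP q hqmem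
  have hQq := constOn hQ q hqmem
  have hRq := constOn hR q hqmem
  have hqp : q - p = ℓ := by rw [hq]; ring
  simp only [hqp, sub_self, Real.cos_zero, Real.sin_zero] at hPq hQq hRq
  have hpy := Real.sin_sq_add_cos_sq ℓ
  have h2 : m2 q = m2 p * Real.cos ℓ - m3 p * Real.sin ℓ := by
    have hQ' : m2 q * Real.cos ℓ + m3 q * Real.sin ℓ = m2 p * 1 + m3 p * 0 := hQq
    have hR' : m3 q * Real.cos ℓ - m2 q * Real.sin ℓ = m3 p * 1 - m2 p * 0 := hRq
    linear_combination Real.cos ℓ * hQ' - Real.sin ℓ * hR' - m2 q * hpy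
  have h3 : m3 q = m2 p * Real.sin ℓ + m3 p * Real.cos ℓ := by
    have hQ' : m2 q * Real.cos ℓ + m3 q * Real.sin ℓ = m2 p * 1 + m3 p * 0 := hQq
    have hR' : m3 q * Real.cos ℓ - m2 q * Real.sin ℓ = m3 p * 1 - m2 p * 0 := hRq
    linear_combination Real.sin ℓ * hQ' + Real.cos ℓ * hR' - m3 q * hpy
  have h1 : m1 q = m1 p + m2 p * Real.sin ℓ + m3 p * (Real.cos ℓ - 1) := by
    have hP' : m1 q - m3 q = m1 p - m3 p := hPq
    linear_combination hP' + h3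
  exact ⟨h1, h2, h3⟩

/-- Let `γ ∈ (0, π/2)`, `s = sin γ`, `a ≠ 0`, `b ≠ 0`. Let
`ℓ ∈ (0, 2π)` satisfy `tan(ℓ/2) = −a/b`, and set `T = 2π/s + ℓ`. Suppose
`m : [0, T] → ℝ³` is continuous, satisfies the X-system on `[0, π/s]` and on
`[π/s + ℓ, T]`, satisfies the Y-system on `[π/s, π/s + ℓ]`, and `m(0) = (0, a, b)`.
Then `m₁(π/s) = 0`, `m₁(π/s + ℓ) = 0`, `m(T) = (0, −a, b)`, and `T > τ` for every
`τ ∈ (0, 2π)`: the three-bang block `X(π/s) Y(ℓ) X(π/s)` induces the same map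
`(0, a, b) ↦ (0, −a, b)` on switching data as a single switching-to-switching Y-arc, but
takes strictly longer time than any Y-arc of duration less than `2π`. -/
theorem stmt_15 (γ a b ℓ T : ℝ) (hγ : γ ∈ Set.Ioo 0 (π/2)) (ha : a ≠ 0) (hb : b ≠ 0)
    (hℓ : ℓ ∈ Set.Ioo 0 (2*π))
    (htan : tan (ℓ/2) = -(a / b))
    (hT : T = 2*π / sin γ + ℓ)
    (m1 m2 m3 : ℝ → ℝ)
    (hc1 : ContinuousOn m1 (Set.Icc 0 T))
    (hc2 : ContinuousOn m2 (Set.Icc 0 T))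
    (hc3 : ContinuousOn m3 (Set.Icc 0 T))
    -- X-system on [0, π/s]
    (hXa : ∀ t ∈ Set.Icc 0 (π / sin γ),
      HasDerivWithinAt m1 (m2 t) (Set.Icc 0 (π / sin γ)) t ∧
      HasDerivWithinAt m2 (-(sin γ)^2 * m1 t) (Set.Icc 0 (π / sin γ)) t ∧
      HasDerivWithinAt m3 ((sin γ)^2 * m2 t) (Set.Icc 0 (π / sin γ)) t)
    -- Y-system on [π/s, π/s + ℓ]
    (hY : ∀ t ∈ Set.Icc (π / sin γ) (π / sin γ + ℓ),
      HasDerivWithinAt m1 (m2 t) (Set.Icc (π / sin γ) (π / sin γ + ℓ)) t ∧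
      HasDerivWithinAt m2 (-(m3 t)) (Set.Icc (π / sin γ) (π / sin γ + ℓ)) t ∧
      HasDerivWithinAt m3 (m2 t) (Set.Icc (π / sin γ) (π / sin γ + ℓ)) t)
    -- X-system on [π/s + ℓ, T]
    (hXb : ∀ t ∈ Set.Icc (π / sin γ + ℓ) T,
      HasDerivWithinAt m1 (m2 t) (Set.Icc (π / sin γ + ℓ) T) t ∧
      HasDerivWithinAt m2 (-(sin γ)^2 * m1 t) (Set.Icc (π / sin γ + ℓ) T) t ∧
      HasDerivWithinAt m3 ((sin γ)^2 * m2 t) (Set.Icc (π / sin γ + ℓ) T) t)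
    (h10 : m1 0 = 0) (h20 : m2 0 = a) (h30 : m3 0 = b) :
    m1 (π / sin γ) = 0 ∧
    m1 (π / sin γ + ℓ) = 0 ∧
    (m1 T = 0 ∧ m2 T = -a ∧ m3 T = b) ∧
    (∀ τ ∈ Set.Ioo 0 (2*π), T > τ) := by
  have hs : 0 < Real.sin γ :=
    Real.sin_pos_of_pos_of_lt_pi hγ.1 (lt_trans hγ.2 (by linarith [pi_pos]))
  have hs1 : Real.sin γ < 1 := by
    have h := Real.strictMonoOn_sin
      (Set.mem_Icc.2 ⟨by linarith [pi_pos, hγ.1], hγ.2.le⟩)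
      (Set.mem_Icc.2 ⟨by linarith [pi_pos], le_rfl⟩) hγ.2
    rwa [Real.sin_pi_div_two] at h
  -- half-angle facts
  have hc2ne : Real.cos (ℓ/2) ≠ 0 := by
    intro h
    rw [Real.tan_eq_sin_div_cos, h, div_zero] at htan
    have : a / b = 0 := by linarith
    exact ha ((div_eq_zero_iff.1 this).resolve_right hb)
  have hbs : b * Real.sin (ℓ/2) + a * Real.cos (ℓ/2) = 0 := by
    have h := htan
    rw [Real.tan_eq_sin_div_cos] at h
    field_simp at h
    linear_combination h
  have hpy2 : Real.sin (ℓ/2)^2 + Real.cos (ℓ/2)^2 = 1 := Real.sin_sq_add_cos_sq _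
  have hsl : Real.sin ℓ = 2 * Real.sin (ℓ/2) * Real.cos (ℓ/2) := by
    have h := Real.sin_two_mul (ℓ/2)
    rwa [show (2:ℝ)*(ℓ/2) = ℓ by ring] at h
  have hcl : Real.cos ℓ = 2 * Real.cos (ℓ/2)^2 - 1 := by
    have h := Real.cos_two_mul (ℓ/2)
    rwa [show (2:ℝ)*(ℓ/2) = ℓ by ring] at h
  have key1 : -a * Real.sin ℓ + b * (Real.cos ℓ - 1) = 0 := by
    rw [hsl, hcl]
    linear_combination (-2*Real.sin (ℓ/2))*hbs + 2*b*hpy2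
  have key2 : -a * Real.cos ℓ - b * Real.sin ℓ = a := by
    rw [hsl, hcl]
    linear_combination (-2*Real.cos (ℓ/2))*hbs
  have key3 : -a * Real.sin ℓ + b * Real.cos ℓ = b := by linarith
  -- first X arc
  obtain ⟨hA1, hA2, hA3⟩ :=
    xArc (m1 := m1) (m2 := m2) (m3 := m3) hs (show π / Real.sin γ = 0 + π / Real.sin γ by ring)
      (by simpa using hXa) h10
  rw [h20] at hA2
  rw [h30] at hA3
  -- Y arc
  obtain ⟨hB1, hB2, hB3⟩ :=
    yArc (m1 := m1) (m2 := m2) (m3 := m3) hℓ.1 rfl hY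
  rw [hA1] at hB1
  rw [hA2, hA3] at hB1 hB2 hB3
  have hm1B : m1 (π / Real.sin γ + ℓ) = 0 := by
    rw [hB1]; linarith [key1]
  have hm2B : m2 (π / Real.sin γ + ℓ) = a := by
    rw [hB2]; linarith [key2]
  have hm3B : m3 (π / Real.sin γ + ℓ) = b := by
    rw [hB3]; linarith [key3]
  -- second X arc
  obtain ⟨hC1, hC2, hC3⟩ :=
    xArc (m1 := m1) (m2 := m2) (m3 := m3) hs
      (show T = (π / Real.sin γ + ℓ) + π / Real.sin γ by rw [hT]; ring)
      (by simpa using hXb) hm1B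
  rw [hm2B] at hC2
  rw [hm3B] at hC3
  refine ⟨hA1, hm1B, ⟨hC1, hC2, hC3⟩, ?_⟩
  intro τ hτ
  have h2pi : 2*π < 2*π / Real.sin γ := by
    rw [lt_div_iff₀ hs]
    nlinarith [pi_pos]
  rw [hT]
  linarith [hτ.2, hℓ.1]
end

section
/- Let γ ∈ (0, π/2), s = sin γ, c = cos γ. Let ψ : ℝ → ℝ³ be differentiable with ψ'(τ) = X ψ(τ) and ψ(0) = (0, s, c), and let χ : ℝ → ℝ³ be differentiable with χ'(τ) = Y χ(τ) and χ(0) = (0, s, c). Then for every τ with 0 < s τ < 2π one has ψ₃(τ) < χ₃(τ); that is, the X-arc strictly decreases the third component c while the Y-arc leaves it equal to c. -/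
open Matrix Real

/-! Both arcs are explicit: the `X`-arc is
`τ ↦ (sin (sτ), s cos (sτ), c cos (sτ))`, the `Y`-arc is `τ ↦ (s sin τ, s cos τ, c)`.
By uniqueness for linear ODEs the third components are `c cos (sτ)` and `c`, and
`cos (sτ) < 1` for `0 < sτ < 2π`. -/

theorem Matrix.eq_of_hasDerivAt_mulVec {n : Type*} [Fintype n] (M : Matrix n n ℝ)
    {f g : ℝ → n → ℝ} (hf : ∀ t, HasDerivAt f (M *ᵥ f t) t)
    (hg : ∀ t, HasDerivAt g (M *ᵥ g t) t) {t₀ : ℝ} (h : f t₀ = g t₀) : f = g :=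
  ODE_solution_unique_univ (v := fun _ ↦ LinearMap.toContinuousLinearMap M.mulVecLin)
    (s := fun _ ↦ Set.univ) (fun _ ↦ (ContinuousLinearMap.lipschitz _).lipschitzOnWith)
    (fun t ↦ ⟨hf t, trivial⟩) (fun t ↦ ⟨hg t, trivial⟩) h

theorem hasDerivAt_vecCons₃ {f₀ f₁ f₂ : ℝ → ℝ} {a b c τ : ℝ} (h₀ : HasDerivAt f₀ a τ)
    (h₁ : HasDerivAt f₁ b τ) (h₂ : HasDerivAt f₂ c τ) :
    HasDerivAt (fun t ↦ ![f₀ t, f₁ t, f₂ t]) ![a, b, c] τ := by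
  rw [hasDerivAt_pi]
  intro i
  fin_cases i <;> assumption

theorem Real.cos_lt_one_of_pos_of_lt_two_pi {x : ℝ} (h₀ : 0 < x) (h₁ : x < 2 * π) :
    cos x < 1 :=
  (cos_le_one x).lt_of_ne fun h ↦ h₀.ne' <|
    (cos_eq_one_iff_of_lt_of_lt (by linarith [pi_pos]) h₁).1 h

noncomputable def xArc_s18 (γ τ : ℝ) : Fin 3 → ℝ :=
  ![sin (sin γ * τ), sin γ * cos (sin γ * τ), cos γ * cos (sin γ * τ)]

noncomputable def yArc_s18 (γ τ : ℝ) : Fin 3 → ℝ :=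
  ![sin γ * sin τ, sin γ * cos τ, cos γ]

theorem Xmat_mulVec_xArc (γ τ : ℝ) :
    Xmat γ *ᵥ xArc_s18 γ τ = ![sin γ * cos (sin γ * τ), -(sin γ ^ 2 * sin (sin γ * τ)),
      -(sin γ * cos γ * sin (sin γ * τ))] := by
  ext i
  fin_cases i
  · simp only [mulVec, dotProduct, Xmat, xArc_s18, Fin.zero_eta, Fin.isValue, of_apply, cons_val',
      cons_val_fin_one, cons_val_zero, Fin.sum_univ_three, zero_mul, cons_val_one, zero_add,
      cons_val]
    linear_combination (sin γ * cos (sin γ * τ)) * sin_sq_add_cos_sq γ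
  all_goals simp [Xmat, xArc_s18, mulVec, dotProduct, Fin.sum_univ_three]

theorem Ymat_mulVec_yArc (γ τ : ℝ) :
    Ymat *ᵥ yArc_s18 γ τ = ![sin γ * cos τ, -(sin γ * sin τ), 0] := by
  ext i
  fin_cases i <;> simp [Ymat, yArc_s18, mulVec, dotProduct, Fin.sum_univ_three]

theorem hasDerivAt_xArc (γ τ : ℝ) : HasDerivAt (xArc_s18 γ) (Xmat γ *ᵥ xArc_s18 γ τ) τ := by
  have hθ : HasDerivAt (fun t ↦ sin γ * t) (sin γ) τ := hasDerivAt_const_mul _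
  rw [Xmat_mulVec_xArc]
  exact hasDerivAt_vecCons₃ (hθ.sin.congr_deriv (mul_comm _ _))
    ((hθ.cos.const_mul _).congr_deriv (by ring)) ((hθ.cos.const_mul _).congr_deriv (by ring))

theorem hasDerivAt_yArc (γ τ : ℝ) : HasDerivAt (yArc_s18 γ) (Ymat *ᵥ yArc_s18 γ τ) τ := by
  rw [Ymat_mulVec_yArc]
  exact hasDerivAt_vecCons₃ ((hasDerivAt_sin τ).const_mul _)
    (((hasDerivAt_cos τ).const_mul _).congr_deriv (by ring)) (hasDerivAt_const τ _)

/-- Let `γ ∈ (0, π/2)`, `s = sin γ`, `c = cos γ`. Let `ψ` solve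
`ψ' = X ψ`, `ψ(0) = (0, s, c)`, and let `χ` solve `χ' = Y χ`, `χ(0) = (0, s, c)`. Then for
every `τ` with `0 < s τ < 2π` one has `ψ₃(τ) < χ₃(τ)`: the X-arc strictly decreases the
third component while the Y-arc leaves it equal to `c`. -/
theorem stmt_18 (γ : ℝ) (hγ : γ ∈ Set.Ioo 0 (π/2))
    (ψ χ : ℝ → Fin 3 → ℝ)
    (hψ : ∀ τ, HasDerivAt ψ (Xmat γ *ᵥ ψ τ) τ)
    (hψ0 : ψ 0 = ![0, sin γ, cos γ])
    (hχ : ∀ τ, HasDerivAt χ (Ymat *ᵥ χ τ) τ)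
    (hχ0 : χ 0 = ![0, sin γ, cos γ]) :
    ∀ τ : ℝ, 0 < sin γ * τ → sin γ * τ < 2*π → ψ τ 2 < χ τ 2 := by
  intro τ hpos hlt
  have hψ_eq : ψ = xArc_s18 γ :=
    (Xmat γ).eq_of_hasDerivAt_mulVec hψ (hasDerivAt_xArc γ) (t₀ := 0) (by simp [hψ0, xArc_s18])
  have hχ_eq : χ = yArc_s18 γ :=
    Ymat.eq_of_hasDerivAt_mulVec hχ (hasDerivAt_yArc γ) (t₀ := 0) (by simp [hχ0, yArc_s18])
  have hcos : cos (sin γ * τ) < 1 := cos_lt_one_of_pos_of_lt_two_pi hpos hlt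
  have hc : 0 < cos γ := cos_pos_of_mem_Ioo ⟨by linarith [pi_pos, hγ.1], hγ.2⟩
  simpa [hψ_eq, hχ_eq, xArc_s18, yArc_s18] using mul_lt_mul_of_pos_left hcos hc
end
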